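/- arXiv:1105.0852 — 2 statements merged into one kernel-verified Lean document; each statement's English description precedes it below -/
import Mathlib

section
/- Set M = D(I_I − P^D_ℛ), where I_I is the I×I identity matrix. Then the K×K matrix EᵀME is invertible, the L×L matrix ZᵀMZ − ZᵀME(EᵀME)⁻¹EᵀMZ is invertible, and its inverse equals Z°⁻ Cᵀ P^D_ℋ D⁻¹ C Z°⁻ᵀ; i.e. the asymptotic covariance matrix of the odds-ratio parameter estimator can be written in terms of the row-multinomial covariance matrix M as Σ_θ̂ = [ZᵀMZ − ZᵀME(EᵀME)⁻¹EᵀMZ]⁻¹. -/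
open Matrix BigOperators

noncomputable section

/-- Cells `(j,k)` of a `(J+1) × (K+1)` contingency table. -/
abbrev Cell (J K : ℕ) := Fin (J + 1) × Fin (K + 1)

/-- Standard unit vector `e_{jk}` in `ℝ^I`. -/
def eV {J K : ℕ} (c : Cell J K) : Cell J K → ℝ := Pi.single c 1

/-- Row-sum vector `e_{j+} = Σ_k e_{jk}`. -/
def eRow {J K : ℕ} (j : Fin (J + 1)) : Cell J K → ℝ := ∑ k : Fin (K + 1), eV (j, k)

/-- Column-sum vector `e_{+k} = Σ_j e_{jk}`. -/
def eCol {J K : ℕ} (k : Fin (K + 1)) : Cell J K → ℝ := ∑ j : Fin (J + 1), eV (j, k)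

/-- The all-ones vector `e_{++}`. -/
def eAll (J K : ℕ) : Cell J K → ℝ := ∑ j : Fin (J + 1), ∑ k : Fin (K + 1), eV (j, k)

/-- The row space `ℛ = span{e_{0+},…,e_{J+}}`. -/
def rowSpace (J K : ℕ) : Submodule ℝ (Cell J K → ℝ) :=
  Submodule.span ℝ (Set.range (eRow (J := J) (K := K)))

/-- The column space `𝒞 = span{e_{+0},…,e_{+K}}`. -/
def colSpace (J K : ℕ) : Submodule ℝ (Cell J K → ℝ) :=
  Submodule.span ℝ (Set.range (eCol (J := J) (K := K)))

/-- The diagonal space `𝒟 = span{e_{++}}`. -/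
def diagSpace (J K : ℕ) : Submodule ℝ (Cell J K → ℝ) :=
  Submodule.span ℝ {eAll J K}

/-- The marginal space `𝒯 = ℛ + 𝒞`. -/
def margSpace (J K : ℕ) : Submodule ℝ (Cell J K → ℝ) := rowSpace J K ⊔ colSpace J K

/-- `P` is the `D`-orthogonal projection matrix onto the subspace `S`:
`P x ∈ S` and `x - P x` is `D`-orthogonal to `S`, for every `x`. -/
def IsProjD {J K : ℕ} (D : Matrix (Cell J K) (Cell J K) ℝ) (S : Submodule ℝ (Cell J K → ℝ))
    (P : Matrix (Cell J K) (Cell J K) ℝ) : Prop :=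
  ∀ x, P.mulVec x ∈ S ∧ ∀ s ∈ S, (x - P.mulVec x) ⬝ᵥ D.mulVec s = 0

/-- The `D`-orthogonal complement of a subspace `S`. -/
def perpD {J K : ℕ} (D : Matrix (Cell J K) (Cell J K) ℝ) (S : Submodule ℝ (Cell J K → ℝ)) :
    Submodule ℝ (Cell J K → ℝ) where
  carrier := {x | ∀ t ∈ S, x ⬝ᵥ D.mulVec t = 0}
  add_mem' := by
    intro a b ha hb t ht
    simp only [Set.mem_setOf_eq] at *
    simp [add_dotProduct, ha t ht, hb t ht]
  zero_mem' := by
    intro t ht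
    simp
  smul_mem' := by
    intro c a ha t ht
    simp only [Set.mem_setOf_eq] at *
    simp [smul_dotProduct, ha t ht]

/-- The vector `c_{jk} = e_{jk} + e_{00} - e_{j0} - e_{0k}` (for `1 ≤ j`, `1 ≤ k`). -/
def cVec {J K : ℕ} (j : Fin J) (k : Fin K) : Cell J K → ℝ :=
  eV (j.succ, k.succ) + eV (0, 0) - eV (j.succ, 0) - eV (0, k.succ)

/-- The `I × (JK)` matrix `C` with columns `c_{jk}`. -/
def Cmat (J K : ℕ) : Matrix (Cell J K) (Fin J × Fin K) ℝ :=
  fun i jk => cVec jk.1 jk.2 i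

/-- The vector `b_k = e_{0k} - e_{00}` (for `1 ≤ k`). -/
def bVec {J K : ℕ} (k : Fin K) : Cell J K → ℝ :=
  eV ((0 : Fin (J + 1)), k.succ) - eV (0, 0)

/-- The `I × K` matrix `B` with columns `b_k`. -/
def Bmat (J K : ℕ) : Matrix (Cell J K) (Fin K) ℝ :=
  fun i k => bVec k i

/-- The `I × K` matrix `E` with columns `e_{+1},…,e_{+K}`. -/
def Emat (J K : ℕ) : Matrix (Cell J K) (Fin K) ℝ :=
  fun i k => eCol k.succ i

/-- Column space of a matrix. -/
def colSpan {m n : Type*} [Fintype n] (A : Matrix m n ℝ) : Submodule ℝ (m → ℝ) :=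
  Submodule.span ℝ (Set.range fun j => fun i => A i j)

/-- The reduced `(JK) × L` covariate matrix `Z°` with rows `z_{jk}ᵀ`, `j,k ≥ 1`. -/
def Zred {J K : ℕ} {L : Type*} (Z : Matrix (Cell J K) L ℝ) : Matrix (Fin J × Fin K) L ℝ :=
  fun jk => Z (jk.1.succ, jk.2.succ)

/-- The model space `ℋ = 𝒯 + col(Z)` of the log-linear model
`η_{jk} = α + ρ_j + γ_k + z_{jk}ᵀ θ`. -/
def modelSpace {J K : ℕ} {L : Type*} [Fintype L] (Z : Matrix (Cell J K) L ℝ) :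
    Submodule ℝ (Cell J K → ℝ) :=
  margSpace J K ⊔ colSpan Z

end

/-!
If `P` is the `D`-orthogonal projection onto `S` and `N = D (1 - P)`, then the projection onto
`S ⊔ col W` is `P + (1 - P) W (Wᵀ N W)⁻¹ Wᵀ N`, and its `N` is the Schur complement
`N - N W (Wᵀ N W)⁻¹ Wᵀ N`. Since `𝒯 = ℛ + col E`, updating `P^D_ℛ` (whose `N` is `M`) by `E` gives
`P^D_𝒯`, whose `N` makes the matrix to invert equal to `Zᵀ N Z`; updating once more by `Z` gives
`P^D_ℋ`. The contrasts `C` annihilate `𝒯` and satisfy `CᵀZ = Z°`, so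
`Cᵀ P^D_ℋ D⁻¹ C = Z° (Zᵀ N Z)⁻¹ Z°ᵀ`, and the left inverse `Z°⁻` strips off `Z°`.
-/

theorem Matrix.PosDef.eq_zero_of_dotProduct_mulVec_self {n : Type*} [Fintype n]
    {D : Matrix n n ℝ} (hD : D.PosDef) {x : n → ℝ} (h : x ⬝ᵥ D *ᵥ x = 0) : x = 0 := by
  by_contra hx
  simpa [h] using hD.dotProduct_mulVec_pos hx

theorem Matrix.IsSymm.dotProduct_mulVec_comm {n R : Type*} [Fintype n] [CommSemiring R]
    {D : Matrix n n R} (hD : D.IsSymm) (x y : n → R) : x ⬝ᵥ D *ᵥ y = y ⬝ᵥ D *ᵥ x := by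
  rw [dotProduct_mulVec, ← mulVec_transpose, hD.eq, dotProduct_comm]

theorem Matrix.leftInv_mul_conj_mul_leftInv_transpose {m n R : Type*} [Fintype m] [Fintype n]
    [DecidableEq n] [CommRing R] {A : Matrix m n R} (hA : IsUnit (Aᵀ * A)) (X : Matrix n n R) :
    (Aᵀ * A)⁻¹ * Aᵀ * (A * X * Aᵀ) * ((Aᵀ * A)⁻¹ * Aᵀ)ᵀ = X := by
  have hdet := (isUnit_iff_isUnit_det _).mp hA
  rw [transpose_mul, transpose_transpose, transpose_nonsing_inv, transpose_mul,
    transpose_transpose]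
  calc (Aᵀ * A)⁻¹ * Aᵀ * (A * X * Aᵀ) * (A * (Aᵀ * A)⁻¹)
      = ((Aᵀ * A)⁻¹ * (Aᵀ * A)) * X * ((Aᵀ * A) * (Aᵀ * A)⁻¹) := by
        simp only [Matrix.mul_assoc]
    _ = X := by rw [nonsing_inv_mul _ hdet, mul_nonsing_inv _ hdet, Matrix.one_mul,
        Matrix.mul_one]

theorem Matrix.isUnit_transpose_mul_self_of_rank_eq {m n : Type*} [Fintype m] [Fintype n]
    [DecidableEq n] {A : Matrix m n ℝ} (hA : A.rank = Fintype.card n) : IsUnit (Aᵀ * A) := by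
  have hrange : LinearMap.range (Aᵀ * A).mulVecLin = ⊤ :=
    Submodule.eq_top_of_finrank_eq <| by
      rw [Module.finrank_fintype_fun_eq_card, ← hA, ← rank_transpose_mul_self]; rfl
  exact mulVec_surjective_iff_isUnit.mp (LinearMap.range_eq_top.mp hrange)

theorem Matrix.dotProduct_transpose_mul_mul_mulVec {m n R : Type*} [Fintype m] [Fintype n]
    [CommSemiring R] (A : Matrix m n R) (B : Matrix m m R) (x y : n → R) :
    x ⬝ᵥ (Aᵀ * B * A) *ᵥ y = (A *ᵥ x) ⬝ᵥ B *ᵥ (A *ᵥ y) := by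
  rw [← mulVec_mulVec, ← mulVec_mulVec, dotProduct_mulVec, vecMul_transpose]

theorem Matrix.one_sub_mulVec {n R : Type*} [Fintype n] [DecidableEq n] [Ring R]
    (P : Matrix n n R) (x : n → R) : (1 - P) *ᵥ x = x - P *ᵥ x := by
  rw [sub_mulVec, one_mulVec]

theorem colSpan_eq_range {m n : Type*} [Fintype n] (A : Matrix m n ℝ) :
    colSpan A = LinearMap.range A.mulVecLin :=
  (range_mulVecLin A).symm

namespace IsProjD

variable {J K : ℕ} {D P Q : Matrix (Cell J K) (Cell J K) ℝ} {S : Submodule ℝ (Cell J K → ℝ)}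

theorem unique (hD : D.PosDef) (hP : IsProjD D S P) (hQ : IsProjD D S Q) : P = Q := by
  refine ext_iff_mulVec.mpr fun x => sub_eq_zero.mp (hD.eq_zero_of_dotProduct_mulVec_self ?_)
  have hmem : P *ᵥ x - Q *ᵥ x ∈ S := sub_mem (hP x).1 (hQ x).1
  have hPQ : P *ᵥ x - Q *ᵥ x = (x - Q *ᵥ x) - (x - P *ᵥ x) := by abel
  calc (P *ᵥ x - Q *ᵥ x) ⬝ᵥ D *ᵥ (P *ᵥ x - Q *ᵥ x)
      = (x - Q *ᵥ x) ⬝ᵥ D *ᵥ (P *ᵥ x - Q *ᵥ x) - (x - P *ᵥ x) ⬝ᵥ D *ᵥ (P *ᵥ x - Q *ᵥ x) := by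
        rw [← sub_dotProduct, ← hPQ]
    _ = 0 := by rw [(hP x).2 _ hmem, (hQ x).2 _ hmem, sub_zero]

theorem transpose_mul_eq_mul (hD : D.IsSymm) (hP : IsProjD D S P) : Pᵀ * D = D * P := by
  refine ext_iff_mulVec.mpr fun y => dotProduct_eq _ _ fun x => ?_
  have hx := (hP x).2 _ (hP y).1
  have hy := (hP y).2 _ (hP x).1
  rw [sub_dotProduct, sub_eq_zero] at hx hy
  rw [dotProduct_comm, dotProduct_comm _ x, ← mulVec_mulVec, ← mulVec_mulVec, dotProduct_mulVec,
    vecMul_transpose, hD.dotProduct_mulVec_comm (P *ᵥ x), hy, hD.dotProduct_mulVec_comm, hx]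

theorem one_sub_transpose_mul_eq_mul (hD : D.IsSymm) (hP : IsProjD D S P) :
    (1 - P)ᵀ * D = D * (1 - P) := by
  rw [transpose_sub, transpose_one, Matrix.sub_mul, Matrix.mul_sub, hP.transpose_mul_eq_mul hD,
    Matrix.one_mul, Matrix.mul_one]

theorem dotProduct_mulVec_one_sub (hP : IsProjD D S P) (x : Cell J K → ℝ) {s : Cell J K → ℝ}
    (hs : s ∈ S) : ((1 - P) *ᵥ x) ⬝ᵥ D *ᵥ s = 0 := by
  rw [one_sub_mulVec]
  exact (hP x).2 s hs

theorem mem_of_dotProduct_mulVec_eq_zero (hD : D.PosDef) (hP : IsProjD D S P)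
    {x : Cell J K → ℝ} (hx : x ⬝ᵥ (D * (1 - P)) *ᵥ x = 0) : x ∈ S := by
  have hsymm : D.IsSymm := isHermitian_iff_isSymm.mp hD.isHermitian
  have hsplit : x ⬝ᵥ (D * (1 - P)) *ᵥ x
      = ((1 - P) *ᵥ x) ⬝ᵥ D *ᵥ ((1 - P) *ᵥ x) + (P *ᵥ x) ⬝ᵥ D *ᵥ ((1 - P) *ᵥ x) := by
    rw [← add_dotProduct, ← mulVec_mulVec, one_sub_mulVec, sub_add_cancel]
  rw [hsplit, hsymm.dotProduct_mulVec_comm (P *ᵥ x), dotProduct_mulVec_one_sub hP x (hP x).1,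
    add_zero] at hx
  have hfix := hD.eq_zero_of_dotProduct_mulVec_self hx
  rw [one_sub_mulVec, sub_eq_zero] at hfix
  exact hfix ▸ (hP x).1

variable {n : Type*} [Fintype n]

theorem transpose_mul_update_mul_inv_mul (hD : D.PosDef) (hP : IsProjD D S P)
    {m : Type*} {C : Matrix (Cell J K) m ℝ} (hC : ∀ s ∈ S, Cᵀ *ᵥ s = 0)
    (W : Matrix (Cell J K) n ℝ) (X : Matrix n n ℝ) :
    Cᵀ * (P + (1 - P) * W * X * Wᵀ * (D * (1 - P))) * D⁻¹ * C = Cᵀ * W * X * (Cᵀ * W)ᵀ := by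
  have hsymm : D.IsSymm := isHermitian_iff_isSymm.mp hD.isHermitian
  have hCP : Cᵀ * P = 0 :=
    ext_iff_mulVec.mpr fun v => by rw [← mulVec_mulVec, hC _ (hP v).1, zero_mulVec]
  have hCP' : Cᵀ * (1 - P) = Cᵀ := by rw [Matrix.mul_sub, Matrix.mul_one, hCP, sub_zero]
  have hPC : (1 - P)ᵀ * C = C := by
    have h := congrArg transpose hCP'
    rwa [transpose_mul, transpose_transpose] at h
  have hresD : D * (1 - P) * D⁻¹ = (1 - P)ᵀ := by
    rw [← hP.one_sub_transpose_mul_eq_mul hsymm,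
      mul_nonsing_inv_cancel_right _ _ ((isUnit_iff_isUnit_det _).mp hD.isUnit)]
  calc Cᵀ * (P + (1 - P) * W * X * Wᵀ * (D * (1 - P))) * D⁻¹ * C
      = Cᵀ * P * D⁻¹ * C + (Cᵀ * (1 - P)) * W * X * Wᵀ * (D * (1 - P) * D⁻¹) * C := by
        simp only [Matrix.mul_add, Matrix.add_mul, Matrix.mul_assoc]
    _ = Cᵀ * W * X * (Cᵀ * W)ᵀ := by
        rw [hCP, hCP', hresD, Matrix.zero_mul, Matrix.zero_mul, zero_add,
          Matrix.mul_assoc _ (1 - P)ᵀ, hPC, Matrix.transpose_mul, transpose_transpose,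
          Matrix.mul_assoc]

variable [DecidableEq n]

theorem isUnit_gram (hD : D.PosDef) (hP : IsProjD D S P) (W : Matrix (Cell J K) n ℝ)
    (hW : ∀ a, W *ᵥ a ∈ S → a = 0) : IsUnit (Wᵀ * (D * (1 - P)) * W) := by
  refine mulVec_injective_iff_isUnit.mp fun a b hab => sub_eq_zero.mp (hW _ ?_)
  refine hP.mem_of_dotProduct_mulVec_eq_zero hD ?_
  rw [← dotProduct_transpose_mul_mul_mulVec, mulVec_sub, hab, sub_self, dotProduct_zero]

theorem sup_colSpan (hD : D.PosDef) (hP : IsProjD D S P) (W : Matrix (Cell J K) n ℝ)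
    (hG : IsUnit (Wᵀ * (D * (1 - P)) * W)) :
    IsProjD D (S ⊔ colSpan W)
      (P + (1 - P) * W * (Wᵀ * (D * (1 - P)) * W)⁻¹ * Wᵀ * (D * (1 - P))) := by
  have hsymm : D.IsSymm := isHermitian_iff_isSymm.mp hD.isHermitian
  set N := D * (1 - P)
  set G := Wᵀ * N * W
  intro x
  set y := G⁻¹ *ᵥ (Wᵀ *ᵥ (N *ᵥ x))
  have hQx : (P + (1 - P) * W * G⁻¹ * Wᵀ * N) *ᵥ x = P *ᵥ x + (1 - P) *ᵥ (W *ᵥ y) := by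
    simp only [add_mulVec, ← mulVec_mulVec, y]
  have hres : x - (P + (1 - P) * W * G⁻¹ * Wᵀ * N) *ᵥ x = (1 - P) *ᵥ (x - W *ᵥ y) := by
    rw [hQx, mulVec_sub, one_sub_mulVec P x]
    abel
  have hGy : G *ᵥ y = Wᵀ *ᵥ (N *ᵥ x) := by
    rw [mulVec_mulVec, mul_nonsing_inv _ ((isUnit_iff_isUnit_det _).mp hG), one_mulVec]
  clear_value y
  have hnormal : Wᵀ *ᵥ (N *ᵥ (x - W *ᵥ y)) = 0 := by
    rw [mulVec_sub, mulVec_sub, ← hGy, mulVec_mulVec, mulVec_mulVec, sub_self]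
  have hadj : ∀ v w, ((1 - P) *ᵥ v) ⬝ᵥ D *ᵥ w = (N *ᵥ v) ⬝ᵥ w := fun v w => by
    rw [hsymm.dotProduct_mulVec_comm, mulVec_mulVec, dotProduct_comm]
  rw [colSpan_eq_range]
  refine ⟨?_, fun s hs => ?_⟩
  · rw [hQx, one_sub_mulVec]
    exact add_mem (Submodule.mem_sup_left (hP x).1)
      (sub_mem (Submodule.mem_sup_right ⟨y, rfl⟩) (Submodule.mem_sup_left (hP _).1))
  · obtain ⟨s₁, hs₁, _, ⟨b, rfl⟩, rfl⟩ := Submodule.mem_sup.mp hs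
    rw [hres, mulVec_add, dotProduct_add, dotProduct_mulVec_one_sub hP _ hs₁, zero_add, hadj,
      mulVecLin_apply, dotProduct_mulVec, ← mulVec_transpose, hnormal, zero_dotProduct]

end IsProjD

section ContingencyTable

variable {J K : ℕ}

theorem eRow_apply (j : Fin (J + 1)) (p : Cell J K) : eRow j p = if p.1 = j then 1 else 0 := by
  simp [eRow, eV, Finset.sum_apply, Pi.single_apply, Prod.ext_iff, ite_and]

theorem eCol_apply (k : Fin (K + 1)) (p : Cell J K) : eCol k p = if p.2 = k then 1 else 0 := by
  simp [eCol, eV, Finset.sum_apply, Pi.single_apply, Prod.ext_iff, ite_and]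

theorem exists_eq_of_mem_rowSpace {x : Cell J K → ℝ} (hx : x ∈ rowSpace J K) :
    ∃ r : Fin (J + 1) → ℝ, ∀ p, x p = r p.1 := by
  obtain ⟨r, rfl⟩ := (Submodule.mem_span_range_iff_exists_fun ℝ).mp hx
  exact ⟨r, fun p => by simp [Finset.sum_apply, eRow_apply]⟩

theorem exists_eq_of_mem_colSpace {x : Cell J K → ℝ} (hx : x ∈ colSpace J K) :
    ∃ c : Fin (K + 1) → ℝ, ∀ p, x p = c p.2 := by
  obtain ⟨c, rfl⟩ := (Submodule.mem_span_range_iff_exists_fun ℝ).mp hx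
  exact ⟨c, fun p => by simp [Finset.sum_apply, eCol_apply]⟩

theorem exists_eq_add_of_mem_margSpace {x : Cell J K → ℝ} (hx : x ∈ margSpace J K) :
    ∃ (r : Fin (J + 1) → ℝ) (c : Fin (K + 1) → ℝ), ∀ p, x p = r p.1 + c p.2 := by
  obtain ⟨u, hu, v, hv, rfl⟩ := Submodule.mem_sup.mp hx
  obtain ⟨r, hr⟩ := exists_eq_of_mem_rowSpace hu
  obtain ⟨c, hc⟩ := exists_eq_of_mem_colSpace hv
  exact ⟨r, c, fun p => by rw [Pi.add_apply, hr, hc]⟩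

theorem Emat_mulVec_apply_zero (a : Fin K → ℝ) (j : Fin (J + 1)) :
    (Emat J K *ᵥ a) (j, 0) = 0 := by
  simp [Emat, mulVec, dotProduct, eCol_apply, (Fin.succ_ne_zero _).symm]

theorem Emat_mulVec_apply_succ (a : Fin K → ℝ) (j : Fin (J + 1)) (k : Fin K) :
    (Emat J K *ᵥ a) (j, k.succ) = a k := by
  simp [Emat, mulVec, dotProduct, eCol_apply]

theorem eq_zero_of_Emat_mulVec_mem_rowSpace {a : Fin K → ℝ}
    (ha : Emat J K *ᵥ a ∈ rowSpace J K) : a = 0 := by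
  obtain ⟨r, hr⟩ := exists_eq_of_mem_rowSpace ha
  funext k
  rw [Pi.zero_apply, ← Emat_mulVec_apply_succ a 0, ← Emat_mulVec_apply_zero a 0, hr, hr]

theorem eCol_zero_eq : eCol (J := J) (K := K) 0 = ∑ j, eRow j - ∑ k : Fin K, eCol k.succ := by
  rw [eq_sub_iff_add_eq, ← Fin.sum_univ_succ (f := eCol)]
  exact Finset.sum_comm

theorem rowSpace_sup_colSpan_Emat : rowSpace J K ⊔ colSpan (Emat J K) = margSpace J K := by
  have hE : colSpan (Emat J K) ≤ colSpace J K :=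
    Submodule.span_mono (Set.range_comp_subset_range Fin.succ eCol)
  refine le_antisymm (sup_le_sup_left hE _) (sup_le le_sup_left (Submodule.span_le.mpr ?_))
  rintro _ ⟨k, rfl⟩
  induction k using Fin.cases with
  | zero =>
    rw [SetLike.mem_coe, eCol_zero_eq]
    exact sub_mem (Submodule.mem_sup_left (sum_mem fun j _ => Submodule.subset_span ⟨j, rfl⟩))
      (Submodule.mem_sup_right (sum_mem fun k _ => Submodule.subset_span ⟨k, rfl⟩))
  | succ k => exact Submodule.mem_sup_right (Submodule.subset_span ⟨k, rfl⟩)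

theorem cVec_dotProduct (j : Fin J) (k : Fin K) (t : Cell J K → ℝ) :
    cVec j k ⬝ᵥ t = t (j.succ, k.succ) + t (0, 0) - t (j.succ, 0) - t (0, k.succ) := by
  simp [cVec, eV, add_dotProduct, sub_dotProduct, single_dotProduct]

theorem Cmat_transpose_mulVec_of_mem_margSpace {x : Cell J K → ℝ} (hx : x ∈ margSpace J K) :
    (Cmat J K)ᵀ *ᵥ x = 0 := by
  obtain ⟨r, c, hrc⟩ := exists_eq_add_of_mem_margSpace hx
  funext jk
  change cVec jk.1 jk.2 ⬝ᵥ x = 0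
  rw [cVec_dotProduct, hrc, hrc, hrc, hrc]
  ring

theorem Cmat_transpose_mul {L : Type*} {Z : Matrix (Cell J K) L ℝ}
    (hZrow : ∀ j, Z (j, 0) = 0) (hZcol : ∀ k, Z (0, k) = 0) : (Cmat J K)ᵀ * Z = Zred Z := by
  ext jk l
  change cVec jk.1 jk.2 ⬝ᵥ (fun p => Z p l) = _
  simp [cVec_dotProduct, Zred, hZrow, hZcol]

end ContingencyTable

theorem covariance_via_row_multinomial_covariance_general
    {J K L : ℕ}
    (μ : Cell J K → ℝ) (hμ : ∀ i, 0 < μ i)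
    (Z : Matrix (Cell J K) (Fin L) ℝ)
    (hZrow : ∀ j, Z (j, 0) = 0) (hZcol : ∀ k, Z (0, k) = 0)
    (hZrank : (Zred Z).rank = L)
    (PH : Matrix (Cell J K) (Cell J K) ℝ)
    (hPH : IsProjD (Matrix.diagonal μ) (modelSpace Z) PH)
    (PR : Matrix (Cell J K) (Cell J K) ℝ)
    (hPR : IsProjD (Matrix.diagonal μ) (rowSpace J K) PR)
    (M : Matrix (Cell J K) (Cell J K) ℝ)
    (hM : M = Matrix.diagonal μ * (1 - PR)) :
    IsUnit ((Emat J K)ᵀ * M * Emat J K) ∧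
    IsUnit (Zᵀ * M * Z -
      Zᵀ * M * Emat J K * ((Emat J K)ᵀ * M * Emat J K)⁻¹ * (Emat J K)ᵀ * M * Z) ∧
    (Zᵀ * M * Z -
        Zᵀ * M * Emat J K * ((Emat J K)ᵀ * M * Emat J K)⁻¹ * (Emat J K)ᵀ * M * Z)⁻¹ =
      ((Zred Z)ᵀ * Zred Z)⁻¹ * (Zred Z)ᵀ * (Cmat J K)ᵀ * PH * (Matrix.diagonal μ)⁻¹ *
        Cmat J K * (((Zred Z)ᵀ * Zred Z)⁻¹ * (Zred Z)ᵀ)ᵀ := by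
  subst hM
  have hD : (diagonal μ).PosDef := .diagonal hμ
  have hE := hPR.isUnit_gram hD (Emat J K) fun _ => eq_zero_of_Emat_mulVec_mem_rowSpace
  have hPT := rowSpace_sup_colSpan_Emat ▸ hPR.sup_colSpan hD (Emat J K) hE
  set PT := PR + (1 - PR) * Emat J K * ((Emat J K)ᵀ * (diagonal μ * (1 - PR)) * Emat J K)⁻¹ *
    (Emat J K)ᵀ * (diagonal μ * (1 - PR))
  have hZ : IsUnit ((Zred Z)ᵀ * Zred Z) :=
    isUnit_transpose_mul_self_of_rank_eq (hZrank.trans (Fintype.card_fin L).symm)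
  have hZinj : ∀ a, Zred Z *ᵥ a = 0 → a = 0 := fun a ha =>
    mulVec_injective_of_isUnit hZ (by rw [← mulVec_mulVec, ha, mulVec_zero, mulVec_zero])
  have hS := hPT.isUnit_gram hD Z fun a ha => hZinj a <| by
    rw [← Cmat_transpose_mul hZrow hZcol, ← mulVec_mulVec,
      Cmat_transpose_mulVec_of_mem_margSpace ha]
  set S := Zᵀ * (diagonal μ * (1 - PT)) * Z
  have hSchur : Zᵀ * (diagonal μ * (1 - PR)) * Z - Zᵀ * (diagonal μ * (1 - PR)) * Emat J K *
      ((Emat J K)ᵀ * (diagonal μ * (1 - PR)) * Emat J K)⁻¹ * (Emat J K)ᵀ *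
      (diagonal μ * (1 - PR)) * Z = S := by
    simp only [S, PT]
    generalize ((Emat J K)ᵀ * (diagonal μ * (1 - PR)) * Emat J K)⁻¹ = G
    simp only [Matrix.mul_sub, Matrix.sub_mul, Matrix.mul_add, Matrix.add_mul, Matrix.mul_one,
      Matrix.one_mul, Matrix.mul_assoc]
    abel
  have hCPHC : (Cmat J K)ᵀ * PH * (diagonal μ)⁻¹ * Cmat J K = Zred Z * S⁻¹ * (Zred Z)ᵀ := by
    rw [hPH.unique hD (hPT.sup_colSpan hD Z hS), hPT.transpose_mul_update_mul_inv_mul hD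
      (fun _ => Cmat_transpose_mulVec_of_mem_margSpace), Cmat_transpose_mul hZrow hZcol]
  rw [hSchur]
  refine ⟨hE, hS, ?_⟩
  rw [← leftInv_mul_conj_mul_leftInv_transpose hZ S⁻¹, ← hCPHC]
  simp only [Matrix.mul_assoc]

/-- with `M = D(I − P^D_ℛ)` the row-multinomial covariance matrix,
`EᵀME` and `ZᵀMZ − ZᵀME(EᵀME)⁻¹EᵀMZ` are invertible and the latter's inverse is the
asymptotic covariance matrix `Σ_θ̂ = Z°⁻ Cᵀ P^D_ℋ D⁻¹ C Z°⁻ᵀ`. -/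
theorem covariance_via_row_multinomial_covariance
    {J K L : ℕ} (hJ : 1 ≤ J) (hK : 1 ≤ K) (hL : 1 ≤ L)
    (μ : Cell J K → ℝ) (hμ : ∀ i, 0 < μ i)
    (Z : Matrix (Cell J K) (Fin L) ℝ)
    (hZrow : ∀ j, Z (j, 0) = 0) (hZcol : ∀ k, Z (0, k) = 0)
    (hZrank : (Zred Z).rank = L)
    (PH : Matrix (Cell J K) (Cell J K) ℝ)
    (hPH : IsProjD (Matrix.diagonal μ) (modelSpace Z) PH)
    (PR : Matrix (Cell J K) (Cell J K) ℝ)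
    (hPR : IsProjD (Matrix.diagonal μ) (rowSpace J K) PR)
    (M : Matrix (Cell J K) (Cell J K) ℝ)
    (hM : M = Matrix.diagonal μ * (1 - PR)) :
    IsUnit ((Emat J K)ᵀ * M * Emat J K) ∧
    IsUnit (Zᵀ * M * Z -
      Zᵀ * M * Emat J K * ((Emat J K)ᵀ * M * Emat J K)⁻¹ * (Emat J K)ᵀ * M * Z) ∧
    (Zᵀ * M * Z -
        Zᵀ * M * Emat J K * ((Emat J K)ᵀ * M * Emat J K)⁻¹ * (Emat J K)ᵀ * M * Z)⁻¹ =
      ((Zred Z)ᵀ * Zred Z)⁻¹ * (Zred Z)ᵀ * (Cmat J K)ᵀ * PH * (Matrix.diagonal μ)⁻¹ *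
        Cmat J K * (((Zred Z)ᵀ * Zred Z)⁻¹ * (Zred Z)ᵀ)ᵀ :=
  covariance_via_row_multinomial_covariance_general μ hμ Z hZrow hZcol hZrank PH hPH PR hPR M hM
end

section
/- Set V = P^D_{𝒯^{⊥_D}} Z. Then VᵀDV is invertible and Cᵀ P^D_ℋ D⁻¹ C = CᵀV(VᵀDV)⁻¹VᵀC. -/
open Matrix BigOperators

/-
`V = P_{𝒯^⊥} Z` differs from `Z` column by column by vectors of `𝒯`, so `ℋ = 𝒯 ⊕ col(V)` is a
`D`-orthogonal sum and `P_ℋ = (1 - P_{𝒯^⊥}) + V(VᵀDV)⁻¹VᵀD`. Every interaction contrast `c_{jk}`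
annihilates the additive vectors `ρ_j + γ_k` of `𝒯`, so `Cᵀ(1 - P_{𝒯^⊥}) = 0`, and the trailing `D`
cancels against `D⁻¹`. The Gram matrix `VᵀDV` is invertible because `V` is injective: `V y = 0`
puts `Z y` in `𝒯`, and a vector of `𝒯` vanishing on the first row and column is zero, so `Z° y = 0`.
-/

section ColSpan

variable {m n : Type*} [Fintype n]

lemma mem_colSpan_iff {A : Matrix m n ℝ} {s : m → ℝ} : s ∈ colSpan A ↔ ∃ w, A *ᵥ w = s := by
  change s ∈ Submodule.span ℝ (Set.range A.col) ↔ _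
  rw [← range_mulVecLin]
  rfl

lemma mulVec_mem_colSpan (A : Matrix m n ℝ) (w : n → ℝ) : A *ᵥ w ∈ colSpan A :=
  mem_colSpan_iff.mpr ⟨w, rfl⟩

lemma sup_colSpan_eq_of_sub_mem {W : Submodule ℝ (m → ℝ)} {A B : Matrix m n ℝ}
    (h : ∀ w, A *ᵥ w - B *ᵥ w ∈ W) : W ⊔ colSpan B = W ⊔ colSpan A := by
  have key : ∀ {A B : Matrix m n ℝ}, (∀ w, A *ᵥ w - B *ᵥ w ∈ W) →
      W ⊔ colSpan B ≤ W ⊔ colSpan A := by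
    intro A B h
    refine sup_le le_sup_left fun s hs => ?_
    obtain ⟨w, rfl⟩ := mem_colSpan_iff.mp hs
    rw [← sub_sub_cancel (A *ᵥ w) (B *ᵥ w)]
    exact sub_mem (Submodule.mem_sup_right (mulVec_mem_colSpan A w))
      (Submodule.mem_sup_left (h w))
  exact le_antisymm (key h) (key fun w => neg_sub (A *ᵥ w) (B *ᵥ w) ▸ W.neg_mem (h w))

lemma mulVec_injective_of_rank_eq_card [Fintype m] {A : Matrix m n ℝ} (h : A.rank = Fintype.card n) :
    Function.Injective A.mulVec := by
  rw [mulVec_injective_iff, linearIndependent_iff_card_eq_finrank_span, ← h,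
    rank_eq_finrank_span_cols]
  rfl

end ColSpan

section Projection

variable {J K : ℕ} {D : Matrix (Cell J K) (Cell J K) ℝ}

lemma dotProduct_mulVec_comm_of_isSymm (hD : D.IsSymm) (x y : Cell J K → ℝ) :
    x ⬝ᵥ D *ᵥ y = y ⬝ᵥ D *ᵥ x := by
  rw [dotProduct_mulVec, ← mulVec_transpose, hD.eq, dotProduct_comm]

-- `BilinForm.orthogonal` puts the subspace in the left argument of the form, hence `Dᵀ`.
lemma perpD_eq_orthogonal (D : Matrix (Cell J K) (Cell J K) ℝ) (S : Submodule ℝ (Cell J K → ℝ)) :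
    perpD D S = (toBilin' Dᵀ).orthogonal S := by
  ext x
  simp only [LinearMap.BilinForm.mem_orthogonal_iff, toBilin'_apply', dotProduct_mulVec _ Dᵀ,
    vecMul_transpose, dotProduct_comm]
  rfl

lemma perpD_perpD (hD : D.IsSymm) (hD' : D.Nondegenerate) (S : Submodule ℝ (Cell J K → ℝ)) :
    perpD D (perpD D S) = S := by
  rw [perpD_eq_orthogonal, perpD_eq_orthogonal, hD.eq]
  exact LinearMap.BilinForm.orthogonal_orthogonal hD'.toBilin'
    (isSymm_toBilin'_iff_isSymm.mpr hD).isRefl S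

variable {S T : Submodule ℝ (Cell J K → ℝ)} {P Q : Matrix (Cell J K) (Cell J K) ℝ}

lemma IsProjD.unique_s10 (hD : D.PosDef) (hP : IsProjD D S P) (hQ : IsProjD D S Q) : P = Q := by
  refine ext_iff_mulVec.mpr fun x => sub_eq_zero.mp ?_
  have hS : P *ᵥ x - Q *ᵥ x ∈ S := S.sub_mem (hP x).1 (hQ x).1
  have hzero : (P *ᵥ x - Q *ᵥ x) ⬝ᵥ D *ᵥ (P *ᵥ x - Q *ᵥ x) = 0 := by
    conv_lhs => arg 1; equals (x - Q *ᵥ x) - (x - P *ᵥ x) => abel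
    rw [sub_dotProduct, (hQ x).2 _ hS, (hP x).2 _ hS, sub_zero]
  by_contra hne
  simpa [hzero] using hD.dotProduct_mulVec_pos hne

lemma IsProjD.one_sub (hD : D.IsSymm) (hD' : D.Nondegenerate) (hP : IsProjD D (perpD D S) P) :
    IsProjD D S (1 - P) := by
  intro x
  rw [sub_mulVec, one_mulVec, sub_sub_cancel]
  exact ⟨perpD_perpD hD hD' S ▸ (hP x).2, (hP x).1⟩

lemma IsProjD.add (hD : D.IsSymm) (hP : IsProjD D S P) (hQ : IsProjD D T Q)
    (hTS : T ≤ perpD D S) : IsProjD D (S ⊔ T) (P + Q) := by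
  intro x
  refine ⟨add_mulVec P Q x ▸ Submodule.add_mem_sup (hP x).1 (hQ x).1, fun s hs => ?_⟩
  obtain ⟨u, hu, v, hv, rfl⟩ := Submodule.mem_sup.mp hs
  have hPv : P *ᵥ x ⬝ᵥ D *ᵥ v = 0 := by
    rw [dotProduct_mulVec_comm_of_isSymm hD]
    exact hTS hv _ (hP x).1
  calc (x - (P + Q) *ᵥ x) ⬝ᵥ D *ᵥ (u + v)
      = (x - P *ᵥ x) ⬝ᵥ D *ᵥ u - Q *ᵥ x ⬝ᵥ D *ᵥ u
          + ((x - Q *ᵥ x) ⬝ᵥ D *ᵥ v - P *ᵥ x ⬝ᵥ D *ᵥ v) := by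
        simp only [add_mulVec, mulVec_add, sub_dotProduct, dotProduct_add, add_dotProduct]
        ring
    _ = 0 := by rw [(hP x).2 u hu, hTS (hQ x).1 u hu, (hQ x).2 v hv, hPv]; ring

lemma isProjD_colSpan {L : Type*} [Fintype L] [DecidableEq L] (hD : D.IsSymm)
    {V : Matrix (Cell J K) L ℝ} (hN : IsUnit (Vᵀ * D * V)) :
    IsProjD D (colSpan V) (V * (Vᵀ * D * V)⁻¹ * Vᵀ * D) := by
  intro x
  have hVx : (V * (Vᵀ * D * V)⁻¹ * Vᵀ * D) *ᵥ x = V *ᵥ (((Vᵀ * D * V)⁻¹ * Vᵀ * D) *ᵥ x) := by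
    simp only [Matrix.mul_assoc, mulVec_mulVec]
  refine ⟨hVx ▸ mulVec_mem_colSpan V _, fun s hs => ?_⟩
  obtain ⟨w, rfl⟩ := mem_colSpan_iff.mp hs
  have hnormal : (Vᵀ * D) *ᵥ (x - (V * (Vᵀ * D * V)⁻¹ * Vᵀ * D) *ᵥ x) = 0 := by
    rw [mulVec_sub, mulVec_mulVec, ← Matrix.mul_assoc, ← Matrix.mul_assoc, ← Matrix.mul_assoc,
      mul_nonsing_inv _ ((isUnit_iff_isUnit_det _).mp hN), Matrix.one_mul, sub_self]
  rw [mulVec_mulVec, dotProduct_mulVec, ← mulVec_transpose, transpose_mul, hD.eq, hnormal,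
    zero_dotProduct]

end Projection

section Marginal

variable {J K : ℕ}

lemma eV_dotProduct (c : Cell J K) (t : Cell J K → ℝ) : eV c ⬝ᵥ t = t c := by
  simp [eV]

lemma exists_add_of_mem_margSpace {t : Cell J K → ℝ} (ht : t ∈ margSpace J K) :
    ∃ (ρ : Fin (J + 1) → ℝ) (γ : Fin (K + 1) → ℝ), ∀ a b, t (a, b) = ρ a + γ b := by
  obtain ⟨r, hr, c, hc, rfl⟩ := Submodule.mem_sup.mp ht
  obtain ⟨ρ, rfl⟩ := (Submodule.mem_span_range_iff_exists_fun ℝ).mp hr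
  obtain ⟨γ, rfl⟩ := (Submodule.mem_span_range_iff_exists_fun ℝ).mp hc
  refine ⟨ρ, γ, fun a b => ?_⟩
  simp [eRow, eCol, eV, Finset.sum_apply, Pi.single_apply, Prod.ext_iff, ite_and]

lemma cVec_dotProduct_eq_zero_of_mem_margSpace {t : Cell J K → ℝ} (ht : t ∈ margSpace J K)
    (j : Fin J) (k : Fin K) : cVec j k ⬝ᵥ t = 0 := by
  obtain ⟨ρ, γ, h⟩ := exists_add_of_mem_margSpace ht
  simp only [cVec, add_dotProduct, sub_dotProduct, eV_dotProduct, h]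
  ring

lemma eq_zero_of_mem_margSpace {t : Cell J K → ℝ} (ht : t ∈ margSpace J K)
    (hrow : ∀ j, t (j, 0) = 0) (hcol : ∀ k, t (0, k) = 0) : t = 0 := by
  obtain ⟨ρ, γ, h⟩ := exists_add_of_mem_margSpace ht
  funext ⟨a, b⟩
  show t (a, b) = 0
  linarith [h a b, h a 0, h 0 b, h 0 0, hrow a, hcol b, hrow 0]

lemma Cmat_transpose_mul_eq_zero {ι : Type*} [Fintype ι] [DecidableEq ι]
    {M : Matrix (Cell J K) ι ℝ} (hM : ∀ x, M *ᵥ x ∈ margSpace J K) : (Cmat J K)ᵀ * M = 0 := by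
  ext p i
  have := cVec_dotProduct_eq_zero_of_mem_margSpace (hM (Pi.single i 1)) p.1 p.2
  rwa [mulVec_single_one] at this

lemma mulVec_injective_of_sub_mem_margSpace {L : Type*} [Fintype L] {Z V : Matrix (Cell J K) L ℝ}
    (hZrow : ∀ j, Z (j, 0) = 0) (hZcol : ∀ k, Z (0, k) = 0)
    (hZrank : (Zred Z).rank = Fintype.card L) (hZV : ∀ w, Z *ᵥ w - V *ᵥ w ∈ margSpace J K) :
    Function.Injective V.mulVec := by
  refine (injective_iff_map_eq_zero V.mulVecLin).mpr fun y (hy : V *ᵥ y = 0) => ?_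
  have hZy : Z *ᵥ y = 0 := by
    refine eq_zero_of_mem_margSpace ?_ (fun j => ?_) (fun k => ?_)
    · simpa [hy] using hZV y
    · simp [mulVec, hZrow j]
    · simp [mulVec, hZcol k]
  refine mulVec_injective_of_rank_eq_card hZrank ?_
  rw [mulVec_zero]
  funext jk
  exact congrFun hZy (jk.1.succ, jk.2.succ)

end Marginal

theorem CtPHDinvC_representation_general
    {J K L : ℕ}
    (μ : Cell J K → ℝ) (hμ : ∀ i, 0 < μ i)
    (Z : Matrix (Cell J K) (Fin L) ℝ)
    (hZrow : ∀ j, Z (j, 0) = 0) (hZcol : ∀ k, Z (0, k) = 0)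
    (hZrank : (Zred Z).rank = L)
    (PH : Matrix (Cell J K) (Cell J K) ℝ)
    (hPH : IsProjD (Matrix.diagonal μ) (modelSpace Z) PH)
    (PTperp : Matrix (Cell J K) (Cell J K) ℝ)
    (hPTperp : IsProjD (Matrix.diagonal μ) (perpD (Matrix.diagonal μ) (margSpace J K)) PTperp)
    (V : Matrix (Cell J K) (Fin L) ℝ) (hV : V = PTperp * Z) :
    IsUnit (Vᵀ * Matrix.diagonal μ * V) ∧
    (Cmat J K)ᵀ * PH * (Matrix.diagonal μ)⁻¹ * Cmat J K =
      (Cmat J K)ᵀ * V * (Vᵀ * Matrix.diagonal μ * V)⁻¹ * Vᵀ * Cmat J K := by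
  have hD : (diagonal μ).PosDef := posDef_diagonal_iff.mpr hμ
  have hDdet : IsUnit (diagonal μ).det := (isUnit_iff_isUnit_det _).mp hD.isUnit
  have hT : IsProjD (diagonal μ) (margSpace J K) (1 - PTperp) :=
    hPTperp.one_sub (isSymm_diagonal μ) (nondegenerate_of_det_ne_zero hDdet.ne_zero)
  have hZV : ∀ w, Z *ᵥ w - V *ᵥ w ∈ margSpace J K := fun w => by
    rw [hV, ← mulVec_mulVec]
    simpa only [sub_mulVec, one_mulVec] using (hT (Z *ᵥ w)).1
  have hN : IsUnit (Vᵀ * diagonal μ * V) := by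
    have hVinj := mulVec_injective_of_sub_mem_margSpace hZrow hZcol (by simpa using hZrank) hZV
    simpa using (hD.conjTranspose_mul_mul_same hVinj).isUnit
  have hVperp : colSpan V ≤ perpD (diagonal μ) (margSpace J K) := fun s hs => by
    obtain ⟨w, rfl⟩ := mem_colSpan_iff.mp hs
    rw [hV, ← mulVec_mulVec]
    exact (hPTperp _).1
  have hPH_eq : PH = (1 - PTperp) + V * (Vᵀ * diagonal μ * V)⁻¹ * Vᵀ * diagonal μ := by
    refine hPH.unique_s10 hD ?_
    rw [modelSpace, ← sup_colSpan_eq_of_sub_mem hZV]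
    exact hT.add (isSymm_diagonal μ) (isProjD_colSpan (isSymm_diagonal μ) hN) hVperp
  refine ⟨hN, ?_⟩
  rw [hPH_eq, Matrix.mul_add, Matrix.add_mul, Matrix.add_mul,
    Cmat_transpose_mul_eq_zero fun x => (hT x).1, Matrix.zero_mul, Matrix.zero_mul, zero_add]
  simp only [Matrix.mul_assoc, mul_nonsing_inv_cancel_left _ _ hDdet]

/-- with `V = P^D_{𝒯^{⊥_D}} Z`, the matrix `VᵀDV` is invertible and
`Cᵀ P^D_ℋ D⁻¹ C = CᵀV(VᵀDV)⁻¹VᵀC`. -/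
theorem CtPHDinvC_representation
    {J K L : ℕ} (hJ : 1 ≤ J) (hK : 1 ≤ K) (hL : 1 ≤ L)
    (μ : Cell J K → ℝ) (hμ : ∀ i, 0 < μ i)
    (Z : Matrix (Cell J K) (Fin L) ℝ)
    (hZrow : ∀ j, Z (j, 0) = 0) (hZcol : ∀ k, Z (0, k) = 0)
    (hZrank : (Zred Z).rank = L)
    (PH : Matrix (Cell J K) (Cell J K) ℝ)
    (hPH : IsProjD (Matrix.diagonal μ) (modelSpace Z) PH)
    (PTperp : Matrix (Cell J K) (Cell J K) ℝ)
    (hPTperp : IsProjD (Matrix.diagonal μ) (perpD (Matrix.diagonal μ) (margSpace J K)) PTperp)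
    (V : Matrix (Cell J K) (Fin L) ℝ) (hV : V = PTperp * Z) :
    IsUnit (Vᵀ * Matrix.diagonal μ * V) ∧
    (Cmat J K)ᵀ * PH * (Matrix.diagonal μ)⁻¹ * Cmat J K =
      (Cmat J K)ᵀ * V * (Vᵀ * Matrix.diagonal μ * V)⁻¹ * Vᵀ * Cmat J K :=
  CtPHDinvC_representation_general μ hμ Z hZrow hZcol hZrank PH hPH PTperp hPTperp V hV
end
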